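/- Let (A_m)_{m≥0} be a formal orbit portrait of valence N ≥ 2 with degrees (d_m)_{m≥1}, let m ≥ 0, suppose A_m has exactly one critical complementary arc I = (a,b) of length ℓ, and let ε ∈ (0,1). If the complementary arc (d_{m+1}·a, d_{m+1}·b) of A_{m+1} (the critical value arc) has length at least ε, then ℓ ≥ 1 − (1 − ε)/d_{m+1}. -/
import Mathlib


/-- The unique representative in `[0,1)` of `b - a`; for `a ≠ b` this is the
unique representative of `b − a` in `(0,1)`, the length `ℓ(a,b)` of the arc from `a` to `b`. -/
noncomputable def arcLen (a b : UnitAddCircle) : ℝ :=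
  ((AddCircle.equivIco 1 0) (b - a) : ℝ)

/-- The open arc `(a,b) = {a + t : 0 < t < ℓ(a,b)}` in `ℝ/ℤ`. -/
def openArc (a b : UnitAddCircle) : Set UnitAddCircle :=
  {x | ∃ t : ℝ, 0 < t ∧ t < arcLen a b ∧ x = a + (t : UnitAddCircle)}

/-- `(a,b,c)` is in positive cyclic order: `ℓ(a,b) < ℓ(a,c)`. -/
def PosCyclic (a b c : UnitAddCircle) : Prop := arcLen a b < arcLen a c

/-- A formal orbit portrait of valence `N` with degrees `d`: a sequence of
`N`-element subsets `A m` of `ℝ/ℤ` such that `θ ↦ d_{m+1}·θ` maps `A m`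
bijectively onto `A (m+1)` and carries every triple of pairwise distinct points
of `A m` in positive cyclic order to a triple in positive cyclic order. -/
def IsFormalPortrait (N : ℕ) (d : ℕ → ℕ) (A : ℕ → Set UnitAddCircle) : Prop :=
  ∀ m : ℕ,
    (A m).Finite ∧ (A m).ncard = N ∧
    Set.BijOn (fun θ => d (m + 1) • θ) (A m) (A (m + 1)) ∧
    ∀ a ∈ A m, ∀ b ∈ A m, ∀ c ∈ A m, a ≠ b → a ≠ c → b ≠ c →
      PosCyclic a b c →
        PosCyclic (d (m + 1) • a) (d (m + 1) • b) (d (m + 1) • c)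

/-- `(a,b)` is a complementary arc of `A`: `a, b ∈ A`, `a ≠ b`, and the open
arc `(a,b)` contains no point of `A`. -/
def IsComplArc (A : Set UnitAddCircle) (a b : UnitAddCircle) : Prop :=
  a ≠ b ∧ a ∈ A ∧ b ∈ A ∧ openArc a b ∩ A = ∅
section Basic

lemma rep_mem (x : UnitAddCircle) : ((AddCircle.equivIco 1 0) x : ℝ) ∈ Set.Ico (0:ℝ) 1 := by
  have h := ((AddCircle.equivIco 1 0) x).2
  simpa using h

lemma rep_coe (x : UnitAddCircle) : ((((AddCircle.equivIco 1 0) x : ℝ)) : UnitAddCircle) = x :=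
  (AddCircle.equivIco 1 0).symm_apply_apply x

lemma coe_inj {u v : ℝ} (hu : u ∈ Set.Ico (0:ℝ) 1) (hv : v ∈ Set.Ico (0:ℝ) 1)
    (h : (u : UnitAddCircle) = (v : UnitAddCircle)) : u = v := by
  have hu' : u ∈ Set.Ico (0:ℝ) (0+1) := by simpa using hu
  have hv' : v ∈ Set.Ico (0:ℝ) (0+1) := by simpa using hv
  exact (AddCircle.coe_eq_coe_iff_of_mem_Ico hu' hv').mp h

lemma arcLen_mem (a b : UnitAddCircle) : arcLen a b ∈ Set.Ico (0:ℝ) 1 := rep_mem _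

lemma arcLen_coe (a b : UnitAddCircle) : ((arcLen a b : ℝ) : UnitAddCircle) = b - a := rep_coe _

/-- characterization -/
lemma arcLen_eq_of {a b : UnitAddCircle} {u : ℝ} (hu : u ∈ Set.Ico (0:ℝ) 1)
    (h : (u : UnitAddCircle) = b - a) : arcLen a b = u :=
  coe_inj (arcLen_mem a b) hu (by rw [arcLen_coe, h])

lemma arcLen_self (a : UnitAddCircle) : arcLen a a = 0 :=
  arcLen_eq_of (by constructor <;> norm_num) (by simp)

lemma arcLen_pos {a b : UnitAddCircle} (h : a ≠ b) : 0 < arcLen a b := by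
  rcases lt_or_eq_of_le (arcLen_mem a b).1 with h' | h'
  · exact h'
  · exfalso; apply h
    have := arcLen_coe a b
    rw [← h'] at this
    simp only [QuotientAddGroup.mk_zero] at this
    have : b - a = 0 := this.symm
    have := sub_eq_zero.mp this
    exact this.symm

lemma eq_add_arcLen (a b : UnitAddCircle) : b = a + ((arcLen a b : ℝ) : UnitAddCircle) := by
  rw [arcLen_coe]; abel

lemma arcLen_eq_arcLen_iff {a b c : UnitAddCircle} (h : arcLen a b = arcLen a c) : b = c := by
  have h1 := arcLen_coe a b
  have h2 := arcLen_coe a c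
  rw [h] at h1
  have h3 : b - a = c - a := h1 ▸ h2
  have := sub_left_inj.mp h3
  exact this

/-- splitting: if `arcLen a b < arcLen a c` then `arcLen b c = arcLen a c - arcLen a b`. -/
lemma arcLen_sub {a b c : UnitAddCircle} (h : arcLen a b < arcLen a c) :
    arcLen b c = arcLen a c - arcLen a b := by
  refine arcLen_eq_of ⟨by linarith, by have := (arcLen_mem a c).2; have := (arcLen_mem a b).1; linarith⟩ ?_
  rw [show ((arcLen a c - arcLen a b : ℝ) : UnitAddCircle)
      = ((arcLen a c : ℝ) : UnitAddCircle) - ((arcLen a b : ℝ) : UnitAddCircle) by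
    exact QuotientAddGroup.mk_sub _ _ _]
  rw [arcLen_coe, arcLen_coe]
  abel

lemma arcLen_add_arcLen_symm {a b : UnitAddCircle} (h : a ≠ b) :
    arcLen a b + arcLen b a = 1 := by
  have hba : arcLen b a = 1 - arcLen a b := by
    refine arcLen_eq_of ⟨by have := (arcLen_mem a b).2; linarith,
      by have := arcLen_pos h; linarith⟩ ?_
    rw [show ((1 - arcLen a b : ℝ) : UnitAddCircle)
        = ((1:ℝ) : UnitAddCircle) - ((arcLen a b : ℝ) : UnitAddCircle) by
      exact QuotientAddGroup.mk_sub _ _ _]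
    rw [arcLen_coe]
    have h1 : ((1:ℝ) : UnitAddCircle) = 0 := by
      rw [AddCircle.coe_eq_zero_iff]; exact ⟨1, by simp⟩
    rw [h1]; abel
  linarith

lemma coe_nsmul (d : ℕ) (u : ℝ) :
    ((d • u : ℝ) : UnitAddCircle) = d • ((u : ℝ) : UnitAddCircle) := by
  simp

lemma arcLen_nsmul {a b : UnitAddCircle} {d : ℕ} {u : ℝ}
    (hu : u ∈ Set.Ico (0:ℝ) 1) (hdu : (d:ℝ) * arcLen a b = u) :
    arcLen (d • a) (d • b) = u := by
  refine arcLen_eq_of hu ?_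
  rw [← hdu]
  have : (((d:ℝ) * arcLen a b : ℝ) : UnitAddCircle) = d • ((arcLen a b : ℝ) : UnitAddCircle) := by
    rw [← coe_nsmul]; norm_num
  rw [this, arcLen_coe, smul_sub]

end Basic

lemma coe_inj' {u v : ℝ} (h : (u : UnitAddCircle) = (v : UnitAddCircle))
    (h1 : |u - v| < 1) : u = v := by
  have h2 : ((u - v : ℝ) : UnitAddCircle) = 0 := by
    rw [QuotientAddGroup.mk_sub, h, sub_self]
  obtain ⟨k, hk⟩ := (AddCircle.coe_eq_zero_iff _).mp h2
  have hk' : u - v = (k : ℝ) := by rw [← hk]; simp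
  rw [hk'] at h1
  have : k = 0 := by
    have := abs_lt.mp h1
    have h3 : -1 < k := by exact_mod_cast this.1
    have h4 : k < 1 := by exact_mod_cast this.2
    omega
  rw [this] at hk'
  simp at hk'
  linarith

lemma mem_openArc {a b x : UnitAddCircle} :
    x ∈ openArc a b ↔ x ≠ a ∧ arcLen a x < arcLen a b := by
  constructor
  · rintro ⟨t, ht0, htl, rfl⟩
    have htmem : t ∈ Set.Ico (0:ℝ) 1 := ⟨le_of_lt ht0, lt_trans htl (arcLen_mem a b).2⟩
    have hax : arcLen a (a + (t : UnitAddCircle)) = t :=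
      arcLen_eq_of htmem (by rw [add_sub_cancel_left])
    refine ⟨?_, by rw [hax]; exact htl⟩
    intro h
    rw [h, arcLen_self] at hax
    linarith
  · rintro ⟨hxa, hlt⟩
    exact ⟨arcLen a x, arcLen_pos (Ne.symm hxa), hlt, eq_add_arcLen a x⟩


/-- If `A m` has exactly one critical complementary arc `I = (a,b)` of length
`ℓ` and the associated critical value arc `(d_{m+1}·a, d_{m+1}·b)` of
`A (m+1)` has length at least `ε`, then `ℓ ≥ 1 − (1 − ε)/d_{m+1}`. -/
theorem unicritical_arc_length_lower_bound (N : ℕ) (hN : 2 ≤ N) (d : ℕ → ℕ)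
    (hd : ∀ m, 1 ≤ m → 2 ≤ d m)
    (A : ℕ → Set UnitAddCircle) (hA : IsFormalPortrait N d A) (m : ℕ)
    (a b : UnitAddCircle) (hab : IsComplArc (A m) a b)
    (hcrit : 1 / (d (m + 1) : ℝ) < arcLen a b)
    (huniq : ∀ a' b' : UnitAddCircle, IsComplArc (A m) a' b' →
      1 / (d (m + 1) : ℝ) < arcLen a' b' → a' = a ∧ b' = b)
    (ε : ℝ) (hε0 : 0 < ε) (hε1 : ε < 1)
    (hval : ε ≤ arcLen (d (m + 1) • a) (d (m + 1) • b)) :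
    1 - (1 - ε) / (d (m + 1) : ℝ) ≤ arcLen a b := by
  obtain ⟨hfin, hcard, hbij, hmono⟩ := hA m
  obtain ⟨hne, haA, hbA, hempty⟩ := hab
  have hd2 : 2 ≤ d (m + 1) := hd (m + 1) (by omega)
  have hD0 : (0:ℝ) < (d (m + 1) : ℝ) := by positivity
  have hD0' : (0:ℕ) < d (m + 1) := by omega
  set D := d (m + 1) with hDdef
  -- main induction: arcLen (D•b) (D•z) = D * arcLen b z for all z ∈ A m, z ≠ b
  have key : ∀ n : ℕ, ∀ z ∈ A m, z ≠ b →
      (hfin.toFinset.filter (fun w => arcLen b w < arcLen b z)).card ≤ n →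
      arcLen (D • b) (D • z) = (D : ℝ) * arcLen b z := by
    intro n
    induction n with
    | zero =>
      intro z hzA hzb hcardle
      exfalso
      have hbP : b ∈ hfin.toFinset.filter (fun w => arcLen b w < arcLen b z) := by
        refine Finset.mem_filter.mpr ⟨hfin.mem_toFinset.mpr hbA, ?_⟩
        rw [arcLen_self]
        exact arcLen_pos (Ne.symm hzb)
      have := Finset.card_pos.mpr ⟨b, hbP⟩
      omega
    | succ n ih =>
      intro z hzA hzb hcardle
      set P := hfin.toFinset.filter (fun w => arcLen b w < arcLen b z) with hPdef
      have hbP : b ∈ P := by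
        refine Finset.mem_filter.mpr ⟨hfin.mem_toFinset.mpr hbA, ?_⟩
        rw [arcLen_self]
        exact arcLen_pos (Ne.symm hzb)
      obtain ⟨w, hwP, hwmax⟩ := P.exists_max_image (fun w => arcLen b w) ⟨b, hbP⟩
      have hwA : w ∈ A m := hfin.mem_toFinset.mp (Finset.mem_filter.mp hwP).1
      have hfw : arcLen b w < arcLen b z := (Finset.mem_filter.mp hwP).2
      have hwz : w ≠ z := fun h => lt_irrefl _ (h ▸ hfw)
      have hwz_len : arcLen w z = arcLen b z - arcLen b w := arcLen_sub hfw
      -- (w, z) is a complementary arc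
      have hcomp : openArc w z ∩ A m = ∅ := by
        rw [Set.eq_empty_iff_forall_notMem]
        rintro u ⟨hu1, hu2⟩
        obtain ⟨huw, hulen⟩ := mem_openArc.mp hu1
        have hwu_pos : 0 < arcLen w u := arcLen_pos (Ne.symm huw)
        have hfu : arcLen b u = arcLen b w + arcLen w u := by
          refine arcLen_eq_of ⟨by linarith [(arcLen_mem b w).1, hwu_pos], ?_⟩ ?_
          · have h1 := (arcLen_mem b z).2
            rw [hwz_len] at hulen
            linarith [(arcLen_mem b w).1]
          · rw [QuotientAddGroup.mk_add, arcLen_coe, arcLen_coe]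
            abel
        have huz : arcLen b u < arcLen b z := by
          rw [hwz_len] at hulen; linarith [hfu]
        have huP : u ∈ P := Finset.mem_filter.mpr ⟨hfin.mem_toFinset.mpr hu2, huz⟩
        have := hwmax u huP
        linarith [hfu]
      have hcompArc : IsComplArc (A m) w z := ⟨hwz, hwA, hzA, hcomp⟩
      have hlen_le : arcLen w z ≤ 1 / (D : ℝ) := by
        by_contra h
        push_neg at h
        exact hzb (huniq w z hcompArc h).2
      have hlen_lt : arcLen w z < 1 / (D : ℝ) := by
        rcases lt_or_eq_of_le hlen_le with h | h
        · exact h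
        · exfalso
          apply hwz
          refine hbij.2.1 hwA hzA ?_
          show D • w = D • z
          have h1 : D • z - D • w = 0 := by
            have h2 : D • z - D • w = D • (z - w) := (smul_sub D z w).symm
            have h3 : z - w = ((arcLen w z : ℝ) : UnitAddCircle) := (arcLen_coe w z).symm
            have h4 : (D : ℕ) • ((arcLen w z : ℝ) : UnitAddCircle)
                = (((D : ℝ) * arcLen w z : ℝ) : UnitAddCircle) := by
              rw [show ((D:ℝ) * arcLen w z) = (D : ℕ) • (arcLen w z : ℝ) by simp, coe_nsmul]
            have h5 : (D : ℝ) * arcLen w z = 1 := by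
              rw [h]; field_simp
            rw [h2, h3, h4, h5]
            rw [AddCircle.coe_eq_zero_iff]
            exact ⟨1, by simp⟩
          have := sub_eq_zero.mp h1
          exact this.symm
      have hwz_pos : 0 < arcLen w z := arcLen_pos hwz
      have himg : arcLen (D • w) (D • z) = (D : ℝ) * arcLen w z := by
        have hub : (D : ℝ) * arcLen w z < 1 := by
          calc (D : ℝ) * arcLen w z < (D : ℝ) * (1 / (D : ℝ)) :=
                mul_lt_mul_of_pos_left hlen_lt hD0
            _ = 1 := by field_simp
        exact arcLen_nsmul ⟨mul_nonneg hD0.le hwz_pos.le, hub⟩ rfl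
      by_cases hwb : w = b
      · subst hwb
        rw [himg]
      · -- inductive step
        have hsub : hfin.toFinset.filter (fun u => arcLen b u < arcLen b w) ⊆ P.erase w := by
          intro u hu
          obtain ⟨huT, hulen⟩ := Finset.mem_filter.mp hu
          refine Finset.mem_erase.mpr ⟨fun h => by rw [h] at hulen; exact lt_irrefl _ hulen, ?_⟩
          exact Finset.mem_filter.mpr ⟨huT, lt_trans hulen hfw⟩
        have hcard' : (hfin.toFinset.filter (fun u => arcLen b u < arcLen b w)).card ≤ n := by
          have h1 := Finset.card_le_card hsub
          have h2 := Finset.card_erase_of_mem hwP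
          omega
        have hgw := ih w hwA hwb hcard'
        have hpos : PosCyclic (D • b) (D • w) (D • z) :=
          hmono b hbA w hwA z hzA (Ne.symm hwb) (Ne.symm hzb) hwz hfw
        have hgwz : arcLen (D • b) (D • z)
            = arcLen (D • b) (D • w) + arcLen (D • w) (D • z) := by
          apply coe_inj'
          · rw [QuotientAddGroup.mk_add, arcLen_coe, arcLen_coe, arcLen_coe]
            abel
          · rw [abs_lt]
            have h1 := (arcLen_mem (D • b) (D • z)).2
            have h2 := (arcLen_mem (D • b) (D • w)).1
            have h3 := (arcLen_mem (D • w) (D • z)).2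
            have h4 : 0 < arcLen (D • w) (D • z) := by
              rw [himg]; positivity
            have h5 : arcLen (D • b) (D • w) < arcLen (D • b) (D • z) := hpos
            constructor <;> linarith
        rw [hgwz, hgw, himg, hwz_len]
        ring
  -- apply to z = a
  have hfinal := key hfin.toFinset.card a haA hne (Finset.card_filter_le _ _)
  have hDab : D • a ≠ D • b := fun h => hne (hbij.2.1 haA hbA h)
  have h1 : arcLen (D • b) (D • a) < 1 := (arcLen_mem _ _).2
  have h2 : arcLen (D • a) (D • b) + arcLen (D • b) (D • a) = 1 :=
    arcLen_add_arcLen_symm hDab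
  have h3 : arcLen a b + arcLen b a = 1 := arcLen_add_arcLen_symm hne
  have h4 : ε ≤ 1 - (D : ℝ) * arcLen b a := by
    rw [← hfinal]; linarith [hval]
  have h5 : arcLen b a ≤ (1 - ε) / (D : ℝ) := by
    rw [le_div_iff₀ hD0]
    linarith [mul_comm (arcLen b a) (D : ℝ)]
  linarith
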